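/- arXiv:1104.4013 — 4 statements merged into one kernel-verified Lean document; each statement's English description precedes it below -/
import Mathlib

section
/- For n ≡ 1 (mod 4), let α(i) = (n-3)·K_0(i) + 2·K_2(i) + 2·K_{n-1}(i), where K_k are the binary Krawtchouk polynomials of length n. Then α(i) = (n - 2i - 2 + (-1)^i)·(n - 2i + 2 + (-1)^i) for all integers 0 ≤ i ≤ n. -/
/-- The binary Krawtchouk polynomial value `K_k(i)` for length `n`. -/
def krawtchouk (n k i : ℕ) : ℤ :=
  ∑ j ∈ Finset.range (k + 1),
    (-1 : ℤ) ^ j * (Nat.choose i j : ℤ) * (Nat.choose (n - i) (k - j) : ℤ)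

lemma choose_two_mul (m : ℕ) : m.choose 2 * 2 = m * (m - 1) := by
  induction m with
  | zero => rfl
  | succ k ih =>
    rw [Nat.choose_succ_succ, Nat.choose_one_right, Nat.add_mul, ih]
    cases k with
    | zero => rfl
    | succ l => simp [Nat.succ_sub_one]; ring

lemma choose_pred (m : ℕ) (hm : 1 ≤ m) : m.choose (m - 1) = m := by
  cases m with
  | zero => omega
  | succ k => simp [Nat.succ_sub_one, Nat.choose_succ_self_right]

lemma kraw_zero (n i : ℕ) : krawtchouk n 0 i = 1 := by
  simp [krawtchouk]

lemma kraw_two' (n i : ℕ) (hi : i ≤ n) :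
    krawtchouk n 2 i * 2 =
      (i : ℤ) * ((i : ℤ) - 1) + ((n : ℤ) - i) * ((n : ℤ) - i - 1)
        - 2 * i * ((n : ℤ) - i) := by
  have h1 : ((i.choose 2 : ℕ) : ℤ) * 2 = (i : ℤ) * ((i : ℤ) - 1) := by
    have h := choose_two_mul i
    cases i with
    | zero => simp
    | succ k =>
      have : (((k+1).choose 2 * 2 : ℕ) : ℤ) = (((k+1) * (k+1-1) : ℕ) : ℤ) := by rw [h]
      push_cast [Nat.succ_sub_one] at this
      push_cast
      linarith
  have h2 : (((n - i).choose 2 : ℕ) : ℤ) * 2 = ((n : ℤ) - i) * ((n : ℤ) - i - 1) := by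
    have h := choose_two_mul (n - i)
    rcases Nat.eq_or_lt_of_le hi with hEq | hLt
    · simp [hEq]
    · have h1n : 1 ≤ n - i := by omega
      have : (((n-i).choose 2 * 2 : ℕ) : ℤ) = (((n-i) * (n-i-1) : ℕ) : ℤ) := by rw [h]
      push_cast [Nat.cast_sub hi, Nat.cast_sub h1n] at this
      linarith
  simp only [krawtchouk, Finset.sum_range_succ, Finset.sum_range_one]
  simp [Nat.choose_one_right]
  have hni : ((n - i : ℕ) : ℤ) = (n : ℤ) - i := by omega
  rw [hni] at *
  linarith [h1, h2]

lemma kraw_top (n i : ℕ) (hn : 1 ≤ n) (hi : i ≤ n) :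
    krawtchouk n (n - 1) i = (-1 : ℤ) ^ i * ((n : ℤ) - 2 * i) := by
  unfold krawtchouk
  have hr : n - 1 + 1 = n := by omega
  rw [hr]
  set f : ℕ → ℤ := fun j => (-1 : ℤ) ^ j * (i.choose j : ℤ) * ((n - i).choose (n - 1 - j) : ℤ) with hf
  have key : ∀ j ∈ Finset.range n, j ∉ ({i - 1, i} : Finset ℕ) ∩ Finset.range n → f j = 0 := by
    intro j hj hj'
    simp only [Finset.mem_inter, Finset.mem_insert, Finset.mem_singleton] at hj'
    have hjn : j < n := Finset.mem_range.mp hj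
    have hji : j ≠ i - 1 ∧ j ≠ i := by tauto
    rcases lt_or_ge j i with h | h
    · have : n - i < n - 1 - j := by omega
      simp [hf, Nat.choose_eq_zero_of_lt this]
    · have : i < j := lt_of_le_of_ne h (Ne.symm hji.2)
      simp [hf, Nat.choose_eq_zero_of_lt this]
  rw [← Finset.sum_subset Finset.inter_subset_right key]
  by_cases h0 : i = 0
  · subst h0
    have hset : ({0 - 1, 0} : Finset ℕ) ∩ Finset.range n = {0} := by
      ext x; simp; omega
    rw [hset, Finset.sum_singleton]
    simp [hf, Nat.choose_symm hn, Nat.choose_one_right]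
  · have h1 : 1 ≤ i := Nat.one_le_iff_ne_zero.mpr h0
    have epow : (-1 : ℤ) ^ i = (-1 : ℤ) ^ (i - 1) * (-1) := by
      rw [← pow_succ]; congr 1; omega
    rcases Nat.eq_or_lt_of_le hi with h | h
    · subst h
      have hset : ({i - 1, i} : Finset ℕ) ∩ Finset.range i = {i - 1} := by
        ext x; simp; omega
      rw [hset, Finset.sum_singleton]
      have e0 : i - i = 0 := by omega
      have e1 : i - 1 - (i - 1) = 0 := by omega
      simp only [hf, e0, e1, choose_pred i h1, Nat.choose_self, Nat.cast_one, mul_one]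
      rw [epow]; ring
    · have hset : ({i - 1, i} : Finset ℕ) ∩ Finset.range n = {i - 1, i} := by
        ext x; simp; omega
      rw [hset, Finset.sum_pair (by omega : i - 1 ≠ i)]
      have e1 : n - 1 - (i - 1) = n - i := by omega
      have e2 : n - 1 - i = n - i - 1 := by omega
      have e4 : (n - i).choose (n - i - 1) = n - i := choose_pred (n - i) (by omega)
      simp only [hf, e1, e2, choose_pred i h1, e4, Nat.choose_self, Nat.cast_one, mul_one]
      have hni : ((n - i : ℕ) : ℤ) = (n : ℤ) - i := by omega
      rw [hni, epow]
      ring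

theorem stmt3 (n : ℕ) (hn : n % 4 = 1) (i : ℕ) (hi : i ≤ n) :
    ((n : ℤ) - 3) * krawtchouk n 0 i + 2 * krawtchouk n 2 i
        + 2 * krawtchouk n (n - 1) i =
      ((n : ℤ) - 2 * i - 2 + (-1) ^ i) * ((n : ℤ) - 2 * i + 2 + (-1) ^ i) := by
  have h0 := kraw_zero n i
  have h2 := kraw_two' n i hi
  have ht := kraw_top n i (by omega) hi
  have hsq : ((-1 : ℤ) ^ i) ^ 2 = 1 := by
    rw [← pow_mul, mul_comm i 2, pow_mul]; norm_num
  rw [h0, ht]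
  nlinarith [h2, hsq]
end

section
/- If C is an even-distance binary (n, M, 4) code (all pairwise distances even, minimum distance 4) with n = 2^m - 3 for some m ≥ 3, then M ≤ 2^{n-1}/(n+3). -/
open Finset Matrix

/-!
Delsarte's linear-programming bound, made explicit with the Walsh sums
`T S = ∑_{c ∈ C} (-1) ^ (S ⬝ᵥ c)`. Put `K₁ w = n - 2 w`, `Kₙ w = (-1) ^ w` and
`f = (K₁ + 3 Kₙ) (K₁ - Kₙ)`. As `4 ∣ n + 3`, `K₁ w` is odd, so `f w < 0` would force
`K₁ w = -Kₙ w`, which the parity of `w` rules out. Hence `f ≥ 0`, and `∑_S f |S| · T S ^ 2` is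
at least the contributions `(n + 3) (n - 1) M ^ 2` of `S = 0` and of `S = 1` (where `|T 1| = M`
because all distances are even). On the other hand
`f · T ^ 2 = (K₁ T) ^ 2 + 2 Kₙ (K₁ T) T - 3 T ^ 2`, and `K₁ T` is the Walsh sum of the `n M`
words `e_i + c`, which are distinct because `d ≥ 3`. By Parseval the whole sum is therefore at
most `2 ^ n (n - 1) M`.
-/

namespace BinaryCode

variable {ι : Type*} [Fintype ι]

lemma neg_one_pow_val_add : ∀ a b : ZMod 2,
    (-1 : ℤ) ^ (a + b).val = (-1) ^ a.val * (-1) ^ b.val := by decide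

def walsh (S : ι → ZMod 2) : AddChar (ι → ZMod 2) ℤ where
  toFun v := (-1) ^ (S ⬝ᵥ v).val
  map_zero_eq_one' := by simp
  map_add_eq_mul' v w := by rw [dotProduct_add, neg_one_pow_val_add]

lemma walsh_apply (S v : ι → ZMod 2) : walsh S v = (-1) ^ (S ⬝ᵥ v).val := rfl

lemma walsh_comm (S v : ι → ZMod 2) : walsh S v = walsh v S := by
  rw [walsh_apply, walsh_apply, dotProduct_comm]

@[simp] lemma walsh_zero (v : ι → ZMod 2) : walsh 0 v = 1 := by simp [walsh_apply]

lemma walsh_single [DecidableEq ι] (S : ι → ZMod 2) (i : ι) :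
    walsh S (Pi.single i 1) = (-1) ^ (S i).val := by
  rw [walsh_apply, dotProduct_single, mul_one]

lemma walsh_eq_zero_iff (v : ι → ZMod 2) : walsh v = 0 ↔ v = 0 := by
  classical
  refine ⟨fun h => ?_, fun h => by ext; simp [h]⟩
  by_contra hv
  obtain ⟨i, hi⟩ := Function.ne_iff.1 hv
  have hvi : v i = 1 := by
    simp only [Pi.zero_apply] at hi
    revert hi; generalize v i = a; revert a; decide
  have := AddChar.eq_zero_iff.1 h (Pi.single i 1)
  rw [walsh_single, hvi] at this
  exact absurd this (by decide)

lemma sum_walsh_eq_ite [DecidableEq ι] (v : ι → ZMod 2) :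
    ∑ S, walsh S v = if v = 0 then 2 ^ Fintype.card ι else 0 := by
  classical
  simp_rw [walsh_comm _ v]
  simp [AddChar.sum_eq_ite, walsh_eq_zero_iff]

lemma val_eq_ite : ∀ x : ZMod 2, x.val = if x = 0 then 0 else 1 := by decide

lemma sum_val_eq_hammingNorm (v : ι → ZMod 2) : ∑ i, (v i).val = hammingNorm v := by
  simp_rw [val_eq_ite, hammingNorm, Finset.card_filter, ite_not]

lemma walsh_one (S : ι → ZMod 2) : walsh S 1 = (-1) ^ hammingNorm S := by
  have hsum : ∑ i, S i = ((∑ i, (S i).val : ℕ) : ZMod 2) := by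
    simp
  rw [walsh_apply, dotProduct_one, hsum, ZMod.val_natCast, ← neg_one_pow_eq_pow_mod_two,
    sum_val_eq_hammingNorm]

lemma hammingDist_eq_hammingNorm_add (c c' : ι → ZMod 2) :
    hammingDist c c' = hammingNorm (c + c') := by
  rw [hammingDist_eq_hammingNorm, ZModModule.neg_eq_self]

lemma hammingNorm_single_add_single_le [DecidableEq ι] (i j : ι) :
    hammingNorm (Pi.single i 1 + Pi.single j 1 : ι → ZMod 2) ≤ 2 :=
  calc hammingNorm (Pi.single i 1 + Pi.single j 1 : ι → ZMod 2)
      ≤ #{i, j} := card_le_card fun k hk => by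
        by_contra hij
        simp_all [Pi.single_apply]
    _ ≤ 2 := card_le_two

section WalshSum

variable {α β : Type*}

def walshSum (A : Finset α) (f : α → ι → ZMod 2) (S : ι → ZMod 2) : ℤ :=
  ∑ a ∈ A, walsh S (f a)

lemma walshSum_mul_walshSum (A : Finset α) (B : Finset β) (f : α → ι → ZMod 2)
    (g : β → ι → ZMod 2) (S : ι → ZMod 2) :
    walshSum A f S * walshSum B g S = walshSum (A ×ˢ B) (fun p => f p.1 + g p.2) S := by
  simp only [walshSum, sum_mul_sum, sum_product, AddChar.map_add_eq_mul]

lemma walshSum_add_left (A : Finset α) (f : α → ι → ZMod 2) (u S : ι → ZMod 2) :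
    walshSum A (fun a => u + f a) S = walsh S u * walshSum A f S := by
  simp only [walshSum, mul_sum, AddChar.map_add_eq_mul]

lemma sum_walshSum_mul_walshSum [DecidableEq ι]
    (A : Finset α) (B : Finset β) (f : α → ι → ZMod 2) (g : β → ι → ZMod 2) :
    ∑ S, walshSum A f S * walshSum B g S
      = 2 ^ Fintype.card ι * #{p ∈ A ×ˢ B | f p.1 = g p.2} := by
  simp_rw [walshSum_mul_walshSum, walshSum]
  rw [sum_comm]
  simp_rw [sum_walsh_eq_ite, add_eq_zero_iff_eq_neg, ZModModule.neg_eq_self]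
  rw [sum_ite, sum_const_zero, sum_const, nsmul_eq_mul, add_zero, mul_comm]

end WalshSum

lemma card_le_card_filter_eq {α γ : Type*} (A : Finset α) (f : α → γ) [DecidableEq γ] :
    #A ≤ #{p ∈ A ×ˢ A | f p.1 = f p.2} :=
  card_le_card_of_injOn (fun a => (a, a)) (fun a ha => by simpa using ha)
    fun _ _ _ _ h => congrArg Prod.fst h

lemma card_filter_eq_le_of_injOn {α β γ : Type*} [DecidableEq γ] {A : Finset α}
    {f : α → γ} (hf : Set.InjOn f A) (B : Finset β) (g : β → γ) :
    #{p ∈ A ×ˢ B | f p.1 = g p.2} ≤ #B :=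
  card_le_card_of_injOn Prod.snd (fun p hp => by simp_all) fun p hp q hq h => by
    simp only [coe_filter, mem_product, Set.mem_ofPred_eq] at hp hq
    exact Prod.ext (hf hp.1.1 hq.1.1 (by rw [hp.2, hq.2, h])) h

lemma injOn_single_add [DecidableEq ι] {C : Finset (ι → ZMod 2)}
    (hC : ∀ c ∈ C, ∀ c' ∈ C, c ≠ c' → 3 ≤ hammingDist c c') :
    Set.InjOn (fun p : ι × (ι → ZMod 2) => Pi.single p.1 1 + p.2)
      (univ ×ˢ C : Finset (ι × (ι → ZMod 2))) := by
  rintro ⟨i, c⟩ hc ⟨j, c'⟩ hc' h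
  simp only [coe_product, coe_univ, Set.mem_prod, Set.mem_univ, mem_coe, true_and] at hc hc' h
  have hcc' : c = c' := by
    by_contra hne
    have hsum : c + c' = Pi.single j 1 + Pi.single i 1 :=
      calc c + c' = (c + Pi.single i 1) + (Pi.single i 1 + c') :=
            (ZModModule.add_add_add_cancel _ _ _).symm
        _ = (Pi.single j 1 + c') + (c' + Pi.single i 1) := by
          rw [add_comm c, h, add_comm (Pi.single i 1) c']
        _ = Pi.single j 1 + Pi.single i 1 := ZModModule.add_add_add_cancel _ _ _
    have := hammingNorm_single_add_single_le j i
    rw [← hsum, ← hammingDist_eq_hammingNorm_add] at this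
    exact absurd (hC c hc c' hc' hne) (by omega)
  subst hcc'
  simpa [Pi.single_apply] using congrFun (add_right_cancel h) i

lemma neg_one_pow_val_eq : ∀ x : ZMod 2, (-1 : ℤ) ^ x.val = 1 - 2 * x.val := by decide

lemma walshSum_univ_single [DecidableEq ι] (S : ι → ZMod 2) :
    walshSum univ (fun i => Pi.single i 1) S = Fintype.card ι - 2 * hammingNorm S := by
  simp only [walshSum, walsh_single, neg_one_pow_val_eq, sum_sub_distrib, ← mul_sum,
    ← sum_val_eq_hammingNorm]
  simp

/-- `delsartePoly n` is `(K₁ + 3 Kₙ) (K₁ - Kₙ)` for the Krawtchouk polynomials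
`K₁ w = n - 2 w` and `Kₙ w = (-1) ^ w` of length `n`. -/
def delsartePoly (n w : ℕ) : ℤ := (n - 2 * w + 3 * (-1) ^ w) * (n - 2 * w - (-1) ^ w)

lemma delsartePoly_nonneg {n : ℕ} (hn : 4 ∣ n + 3) (w : ℕ) : 0 ≤ delsartePoly n w := by
  obtain ⟨k, hk⟩ := hn
  rcases Nat.even_or_odd w with hw | hw
  · rw [delsartePoly, hw.neg_one_pow]
    obtain ⟨j, rfl⟩ := hw
    have : (n : ℤ) - 2 * (j + j : ℕ) ≤ -3 ∨ 1 ≤ (n : ℤ) - 2 * (j + j : ℕ) := by omega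
    rcases this with h | h <;> nlinarith
  · rw [delsartePoly, hw.neg_one_pow]
    obtain ⟨j, rfl⟩ := hw
    have : (n : ℤ) - 2 * (2 * j + 1 : ℕ) ≤ -1 ∨ 3 ≤ (n : ℤ) - 2 * (2 * j + 1 : ℕ) := by omega
    rcases this with h | h <;> nlinarith

lemma delsartePoly_zero (n : ℕ) : delsartePoly n 0 = (n + 3) * (n - 1) := by
  rw [delsartePoly]; ring

lemma delsartePoly_self {n : ℕ} (hn : Odd n) : delsartePoly n n = (n + 3) * (n - 1) := by
  rw [delsartePoly, hn.neg_one_pow]; ring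

lemma delsartePoly_mul_sq (n w : ℕ) (T : ℤ) :
    delsartePoly n w * T ^ 2 = ((n - 2 * w) * T) ^ 2 + 2 * ((-1) ^ w * ((n - 2 * w) * T) * T)
      - 3 * T ^ 2 := by
  have hP : ((-1 : ℤ) ^ w) ^ 2 = 1 := by rw [pow_right_comm, neg_one_sq, one_pow]
  rw [delsartePoly]
  linear_combination (-3 * T ^ 2) * hP

section Code

variable {C : Finset (ι → ZMod 2)}

lemma walshSum_single_add [DecidableEq ι] (S : ι → ZMod 2) :
    walshSum (univ ×ˢ C) (fun p => Pi.single p.1 1 + p.2) S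
      = (Fintype.card ι - 2 * hammingNorm S) * walshSum C id S := by
  rw [← walshSum_univ_single, walshSum_mul_walshSum]
  rfl

lemma sum_delsartePoly_mul_sq_le [DecidableEq ι]
    (hC : ∀ c ∈ C, ∀ c' ∈ C, c ≠ c' → 3 ≤ hammingDist c c') :
    ∑ S, delsartePoly (Fintype.card ι) (hammingNorm S) * walshSum C id S ^ 2
      ≤ 2 ^ Fintype.card ι * ((Fintype.card ι - 1) * #C) := by
  set e : ι × (ι → ZMod 2) → ι → ZMod 2 := fun p => Pi.single p.1 1 + p.2
  have he : Set.InjOn e (univ ×ˢ C : Finset (ι × (ι → ZMod 2))) := injOn_single_add hC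
  have hexpand : ∀ S, delsartePoly (Fintype.card ι) (hammingNorm S) * walshSum C id S ^ 2
      = walshSum (univ ×ˢ C) e S * walshSum (univ ×ˢ C) e S
        + 2 * (walshSum (univ ×ˢ C) (fun p => 1 + e p) S * walshSum C id S)
        - 3 * (walshSum C id S * walshSum C id S) := by
    intro S
    rw [walshSum_add_left, walsh_one, walshSum_single_add, delsartePoly_mul_sq]
    ring
  simp_rw [hexpand, sum_sub_distrib, sum_add_distrib, ← mul_sum, sum_walshSum_mul_walshSum]
  have h₁ : #{p ∈ (univ ×ˢ C) ×ˢ (univ ×ˢ C) | e p.1 = e p.2} ≤ Fintype.card ι * #C := by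
    simpa using card_filter_eq_le_of_injOn he (univ ×ˢ C) e
  have h₂ : #{p ∈ (univ ×ˢ C) ×ˢ C | 1 + e p.1 = id p.2} ≤ #C :=
    card_filter_eq_le_of_injOn ((add_right_injective 1).comp_injOn he) C id
  have h₃ := card_le_card_filter_eq C id
  have h2n : (0 : ℤ) ≤ 2 ^ Fintype.card ι := by positivity
  zify at h₁ h₂ h₃
  linarith [mul_le_mul_of_nonneg_left h₁ h2n, mul_le_mul_of_nonneg_left h₂ h2n,
    mul_le_mul_of_nonneg_left h₃ h2n]

lemma walshSum_one_sq (heven : ∀ c ∈ C, ∀ c' ∈ C, Even (hammingDist c c')) :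
    walshSum C id 1 ^ 2 = #C ^ 2 := by
  have h : ∀ p ∈ C ×ˢ C, walsh 1 (id p.1 + id p.2) = 1 := fun p hp => by
    rw [mem_product] at hp
    rw [walsh_comm, walsh_one, id, id, ← hammingDist_eq_hammingNorm_add,
      (heven _ hp.1 _ hp.2).neg_one_pow]
  rw [sq, sq, walshSum_mul_walshSum, walshSum, sum_congr rfl h]
  simp

lemma two_mul_sq_card_le_sum_delsartePoly_mul_sq [DecidableEq ι]
    (hn : 4 ∣ Fintype.card ι + 3) (heven : ∀ c ∈ C, ∀ c' ∈ C, Even (hammingDist c c')) :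
    2 * ((Fintype.card ι + 3) * (Fintype.card ι - 1)) * (#C : ℤ) ^ 2
      ≤ ∑ S, delsartePoly (Fintype.card ι) (hammingNorm S) * walshSum C id S ^ 2 := by
  have hodd : Odd (Fintype.card ι) := by
    obtain ⟨k, hk⟩ := hn
    exact ⟨2 * k - 2, by omega⟩
  have : Nonempty ι := Fintype.card_pos_iff.1 hodd.pos
  calc _ = ∑ S ∈ {0, 1},
        delsartePoly (Fintype.card ι) (hammingNorm S) * walshSum C id S ^ 2 := by
        rw [sum_pair zero_ne_one, walshSum_one_sq heven]
        simp [walshSum, hammingNorm, delsartePoly_zero, delsartePoly_self hodd]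
        ring
    _ ≤ _ := sum_le_sum_of_subset_of_nonneg (subset_univ _) fun S _ _ =>
        mul_nonneg (delsartePoly_nonneg hn _) (sq_nonneg _)

theorem card_mul_le_of_even_dist (hn : 4 ∣ Fintype.card ι + 3) (hn₁ : 1 < Fintype.card ι)
    (hdist : ∀ c ∈ C, ∀ c' ∈ C, c ≠ c' → 3 ≤ hammingDist c c')
    (heven : ∀ c ∈ C, ∀ c' ∈ C, Even (hammingDist c c')) :
    #C * (Fintype.card ι + 3) ≤ 2 ^ (Fintype.card ι - 1) := by
  classical
  rcases C.eq_empty_or_nonempty with rfl | hC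
  · simp
  have hlp := (two_mul_sq_card_le_sum_delsartePoly_mul_sq hn heven).trans
    (sum_delsartePoly_mul_sq_le hdist)
  have hpos : (0 : ℤ) < 2 * (Fintype.card ι - 1) * #C := by
    have : (1 : ℤ) < Fintype.card ι := by exact_mod_cast hn₁
    exact mul_pos (mul_pos two_pos (by linarith)) (by exact_mod_cast hC.card_pos)
  have h2 : (2 : ℤ) ^ Fintype.card ι = 2 * 2 ^ (Fintype.card ι - 1) := by
    rw [← pow_succ', Nat.sub_add_cancel hn₁.le]
  zify
  refine le_of_mul_le_mul_left ?_ hpos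
  rw [h2] at hlp
  linarith

end Code

end BinaryCode

theorem stmt5 (m : ℕ) (hm : 3 ≤ m) (n : ℕ) (hn : n = 2 ^ m - 3)
    (C : Finset (Fin n → ZMod 2))
    (hdist : ∀ c ∈ C, ∀ c' ∈ C, c ≠ c' → 4 ≤ hammingDist c c')
    (heven : ∀ c ∈ C, ∀ c' ∈ C, Even (hammingDist c c')) :
    C.card ≤ 2 ^ (n - 1) / (n + 3) := by
  have h8 : 8 ≤ 2 ^ m := le_trans (by norm_num) (Nat.pow_le_pow_right two_pos hm)
  have h2m : 2 ^ m = 2 ^ (m - 2) * 4 := by rw [← pow_sub_mul_pow 2 (by omega : 2 ≤ m)]; rfl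
  have h4 : 4 ∣ n + 3 := ⟨2 ^ (m - 2), by omega⟩
  rw [Nat.le_div_iff_mul_le (by omega)]
  simpa using BinaryCode.card_mul_le_of_even_dist (by rwa [Fintype.card_fin])
    (by rw [Fintype.card_fin]; omega)
    (fun c hc c' hc' hne => (hdist c hc c' hc' hne).trans' (by norm_num)) heven
end

section
/- Let an even binary (13, 256, 4) code C be given, and suppose every 4-times-shortened subcode (fixing 0s in any 4 coordinates) has exactly 16 codewords. Let N_w denote the number of codewords of C of weight w. Then 5·N_0 + N_2 + N_{12} = 6 and N_0 + N_{10} + 5·N_{12} = 22; in particular 5·N_0 + N_2 ≥ 5 and N_{10} + 5·N_{12} ≤ 22. -/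
theorem stmt13 (C : Finset (Fin 13 → ZMod 2))
    (hcard : C.card = 256)
    (heven : ∀ c ∈ C, Even (hammingNorm c))
    (hdist : ∀ c ∈ C, ∀ c' ∈ C, c ≠ c' → 4 ≤ hammingDist c c')
    (hshort : ∀ s : ℕ, 1 ≤ s → s ≤ 4 → ∀ S : Finset (Fin 13), S.card = s →
      (C.filter fun c => ∀ i ∈ S, c i = 0).card = 2 ^ (8 - s))
    (N : ℕ → ℕ) (hN : ∀ w, N w = (C.filter fun c => hammingNorm c = w).card) :
    5 * N 0 + N 2 + N 12 = 6 ∧ N 0 + N 10 + 5 * N 12 = 22 ∧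
      5 ≤ 5 * N 0 + N 2 ∧ N 10 + 5 * N 12 ≤ 22 := by
  classical
  have hZcard : ∀ c : Fin 13 → ZMod 2,
      (Finset.univ.filter (fun i => c i = 0)).card = 13 - hammingNorm c := by
    intro c
    have h2 := Finset.card_filter_add_card_filter_not
      (s := (Finset.univ : Finset (Fin 13))) (p := fun i => c i = 0)
    have h3 : hammingNorm c = (Finset.univ.filter (fun i => ¬ c i = 0)).card := by
      unfold hammingNorm; congr 1
    simp only [Finset.card_univ, Fintype.card_fin] at h2
    omega
  have hnormle : ∀ c : Fin 13 → ZMod 2, hammingNorm c ≤ 13 := by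
    intro c
    simpa using hammingNorm_le_card_fintype (x := c)
  -- key counting identity
  have key : ∀ s : ℕ, 1 ≤ s → s ≤ 4 →
      ∑ c ∈ C, Nat.choose (13 - hammingNorm c) s = Nat.choose 13 s * 2 ^ (8 - s) := by
    intro s hs1 hs4
    have step1 : ∀ c : Fin 13 → ZMod 2,
        Nat.choose (13 - hammingNorm c) s
          = ∑ S ∈ (Finset.univ : Finset (Fin 13)).powersetCard s,
              (if ∀ i ∈ S, c i = 0 then 1 else 0) := by
      intro c
      rw [← Finset.card_filter]
      have hset : ((Finset.univ : Finset (Fin 13)).powersetCard s).filter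
          (fun S => ∀ i ∈ S, c i = 0)
            = (Finset.univ.filter (fun i => c i = 0)).powersetCard s := by
        clear hcard heven hdist hshort hN hnormle hs1 hs4 hZcard
        ext S
        simp only [Finset.mem_filter, Finset.mem_powersetCard, Finset.subset_iff,
          Finset.mem_filter, Finset.mem_univ, true_and]
        tauto
      rw [hset]
      simp [Finset.card_powersetCard, hZcard c]
    calc ∑ c ∈ C, Nat.choose (13 - hammingNorm c) s
        = ∑ c ∈ C, ∑ S ∈ (Finset.univ : Finset (Fin 13)).powersetCard s,
            (if ∀ i ∈ S, c i = 0 then 1 else 0) := Finset.sum_congr rfl (fun c _ => step1 c)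
      _ = ∑ S ∈ (Finset.univ : Finset (Fin 13)).powersetCard s,
            ∑ c ∈ C, (if ∀ i ∈ S, c i = 0 then 1 else 0) := Finset.sum_comm
      _ = ∑ S ∈ (Finset.univ : Finset (Fin 13)).powersetCard s, (2:ℕ) ^ (8 - s) := by
          refine Finset.sum_congr rfl (fun S hS => ?_)
          rw [← Finset.card_filter]
          exact hshort s hs1 hs4 S (Finset.mem_powersetCard.mp hS).2
      _ = Nat.choose 13 s * 2 ^ (8 - s) := by
          simp [Finset.card_powersetCard]
  -- fiberwise decomposition
  have fib : ∀ g : ℕ → ℕ, ∑ c ∈ C, g (hammingNorm c) = ∑ w ∈ Finset.range 14, N w * g w := by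
    intro g
    rw [← Finset.sum_fiberwise_of_maps_to (g := fun c => hammingNorm c) (t := Finset.range 14)
      (fun c _ => Finset.mem_range.mpr (Nat.lt_succ_of_le (hnormle c)))]
    refine Finset.sum_congr rfl (fun w _ => ?_)
    rw [hN w]
    rw [Finset.sum_congr rfl (fun c hc => by rw [(Finset.mem_filter.mp hc).2])]
    simp
  -- the five equations
  have e4 := key 4 (by norm_num) (by norm_num)
  have e3 := key 3 (by norm_num) (by norm_num)
  have e2 := key 2 (by norm_num) (by norm_num)
  have e1 := key 1 (by norm_num) (by norm_num)
  have e0 : ∑ w ∈ Finset.range 14, N w * 1 = 256 := by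
    rw [← fib (fun _ => 1)]
    simpa using hcard
  rw [fib (fun w => Nat.choose (13 - w) 4)] at e4
  rw [fib (fun w => Nat.choose (13 - w) 3)] at e3
  rw [fib (fun w => Nat.choose (13 - w) 2)] at e2
  rw [fib (fun w => Nat.choose (13 - w) 1)] at e1
  -- odd weights vanish
  have hodd : ∀ w, ¬ Even w → N w = 0 := by
    intro w hw
    rw [hN w, Finset.card_eq_zero, Finset.filter_eq_empty_iff]
    intro c hc hcw
    exact hw (hcw ▸ heven c hc)
  have o1 := hodd 1 (by decide)
  have o3 := hodd 3 (by decide)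
  have o5 := hodd 5 (by decide)
  have o7 := hodd 7 (by decide)
  have o9 := hodd 9 (by decide)
  have o11 := hodd 11 (by decide)
  have o13 := hodd 13 (by decide)
  -- N 12 ≤ 1
  have h12 : N 12 ≤ 1 := by
    rw [hN 12]
    apply Finset.card_le_one.mpr
    intro a ha b hb
    by_contra hne
    have ha' := Finset.mem_filter.mp ha
    have hb' := Finset.mem_filter.mp hb
    have hd := hdist a ha'.1 b hb'.1 hne
    have hsub : (Finset.univ.filter (fun i => a i ≠ b i))
        ⊆ (Finset.univ.filter (fun i => a i = 0)) ∪ (Finset.univ.filter (fun i => b i = 0)) := by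
      intro i hi
      simp only [Finset.mem_filter, Finset.mem_univ, true_and] at hi
      simp only [Finset.mem_union, Finset.mem_filter, Finset.mem_univ, true_and]
      have hx : ∀ x : ZMod 2, x = 0 ∨ x = 1 := by decide
      rcases hx (a i) with h | h
      · exact Or.inl h
      · rcases hx (b i) with h' | h'
        · exact Or.inr h'
        · exact absurd (h.trans h'.symm) hi
    have hle : hammingDist a b
        ≤ ((Finset.univ.filter (fun i => a i = 0)) ∪ (Finset.univ.filter (fun i => b i = 0))).card := by
      have hd2 : hammingDist a b = (Finset.univ.filter (fun i => a i ≠ b i)).card := by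
        unfold hammingDist; congr 1
      rw [hd2]; exact Finset.card_le_card hsub
    have hcu : ((Finset.univ.filter (fun i => a i = 0))
        ∪ (Finset.univ.filter (fun i => b i = 0))).card ≤ 2 := by
      calc ((Finset.univ.filter (fun i => a i = 0)) ∪ (Finset.univ.filter (fun i => b i = 0))).card
          ≤ (Finset.univ.filter (fun i => a i = 0)).card
            + (Finset.univ.filter (fun i => b i = 0)).card := Finset.card_union_le _ _
        _ ≤ 2 := by rw [hZcard a, hZcard b, ha'.2, hb'.2]
    omega
  simp only [Finset.sum_range_succ, Finset.sum_range_zero] at e0 e1 e2 e3 e4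
  norm_num [Nat.choose] at e0 e1 e2 e3 e4
  omega
end

section
/- Let C be an even binary (n, M, 4) code with n = 2^m - 3, M = 2^{2^m-m-4}, whose distance distribution satisfies A_{n-1} = 1 and A_{n-3} = (n-1)(n-5)/6. Define D = {x ∈ F_2^n : d(x, complement of C) = 1} \ C, and let E be the set of even-weight words not in C ∪ D. Then |D| = (n-1)·M and |E| = 3M. -/
/-!
The radius-one spheres around the complements `c + 1` of the codewords are pairwise disjoint
(their centres are at distance `≥ 4`), so their union `S` has `n · |C|` words. Since `n` is odd,
every complement has odd weight and hence every word of `S` has even weight. The hypothesis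
`A_{n-1} = 1` says that each codeword lies at distance one from some complement, i.e. `C ⊆ S`.
Therefore `D = S \ C` has `(n - 1) · |C|` words, and `E` is the set of even-weight words outside
`S`, of size `2^{n-1} - n · |C| = (n + 3) · |C| - n · |C|`.
-/

open Finset

theorem exists_mem_of_card_filter_product_eq_card {α β : Type*} [DecidableEq α]
    {A : Finset α} {B : Finset β} {R : α → β → Prop} [DecidablePred fun p : α × β => R p.1 p.2]
    (hR : ∀ a ∈ A, ∀ b ∈ B, ∀ b' ∈ B, R a b → R a b' → b = b')
    (h : #((A ×ˢ B).filter fun p => R p.1 p.2) = #A) :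
    ∀ a ∈ A, ∃ b ∈ B, R a b := by
  set P := (A ×ˢ B).filter fun p => R p.1 p.2
  have hinj : Set.InjOn Prod.fst (P : Set (α × β)) := by
    rintro ⟨a, b⟩ hp ⟨a', b'⟩ hp' (rfl : a = a')
    simp only [P, coe_filter, mem_product, Set.mem_ofPred_eq] at hp hp'
    rw [hR a hp.1.1 b hp.1.2 b' hp'.1.2 hp.2 hp'.2]
  have himage : P.image Prod.fst = A :=
    eq_of_subset_of_card_le
      (image_subset_iff.2 fun p hp => (mem_product.1 (mem_filter.1 hp).1).1)
      (by rw [card_image_of_injOn hinj, h])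
  intro a ha
  rw [← himage] at ha
  simp only [P, mem_image, mem_filter, mem_product] at ha
  obtain ⟨⟨a, b⟩, ⟨⟨-, hb⟩, hab⟩, rfl⟩ := ha
  exact ⟨b, hb, hab⟩

theorem two_pow_sub_four_eq (m : ℕ) (hm : 4 ≤ m) :
    2 ^ (2 ^ m - 4) = 2 ^ m * 2 ^ (2 ^ m - m - 4) := by
  have hlt := Nat.lt_two_pow_self (n := m - 2)
  have h4 : 2 ^ m = 4 * 2 ^ (m - 2) := by
    rw [show (4 : ℕ) = 2 ^ 2 by rfl, ← pow_add, Nat.add_sub_cancel' (by omega)]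
  rw [← pow_add]
  congr 1
  omega

section Hamming

variable {ι : Type*} [Fintype ι] {β : ι → Type*} [∀ i, DecidableEq (β i)]

def MinDistAtLeast (C : Finset (∀ i, β i)) (d : ℕ) : Prop :=
  ∀ c ∈ C, ∀ c' ∈ C, c ≠ c' → d ≤ hammingDist c c'

theorem MinDistAtLeast.mono {C : Finset (∀ i, β i)} {d d' : ℕ} (hC : MinDistAtLeast C d)
    (h : d' ≤ d) : MinDistAtLeast C d' :=
  fun c hc c' hc' hne => h.trans (hC c hc c' hc' hne)

theorem MinDistAtLeast.eq_of_hammingDist_eq_one {K : Finset (∀ i, β i)}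
    (hK : MinDistAtLeast K 3) {x k k' : ∀ i, β i} (hk : k ∈ K) (hk' : k' ∈ K)
    (h : hammingDist x k = 1) (h' : hammingDist x k' = 1) : k = k' := by
  by_contra hne
  have := hammingDist_triangle k x k'
  have := hK k hk k' hk' hne
  rw [hammingDist_comm] at h
  omega

theorem hammingDist_add_right [∀ i, AddCommGroup (β i)] (x y z : ∀ i, β i) :
    hammingDist (x + z) (y + z) = hammingDist x y := by
  simp only [hammingDist, Pi.add_apply, ne_eq, add_left_inj]

end Hamming

section Binary

variable {ι : Type*} [Fintype ι]

theorem natCast_hammingNorm (x : ι → ZMod 2) : (hammingNorm x : ZMod 2) = ∑ i, x i := by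
  rw [hammingNorm, card_filter]
  push_cast
  refine sum_congr rfl fun i _ => ?_
  generalize x i = a
  revert a
  decide

theorem natCast_hammingNorm_add (x y : ι → ZMod 2) :
    (hammingNorm (x + y) : ZMod 2) = hammingNorm x + hammingNorm y := by
  simp only [natCast_hammingNorm, Pi.add_apply, sum_add_distrib]

theorem natCast_hammingDist (x y : ι → ZMod 2) :
    (hammingDist x y : ZMod 2) = hammingNorm x + hammingNorm y := by
  simp only [hammingDist_eq_hammingNorm, natCast_hammingNorm, Pi.add_apply, Pi.neg_apply,
    sum_add_distrib, ZMod.neg_eq_self_mod_two]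

theorem hammingNorm_one : hammingNorm (1 : ι → ZMod 2) = Fintype.card ι := by
  simp [hammingNorm]

theorem hammingDist_add_one_add_hammingDist (x y : ι → ZMod 2) :
    hammingDist x (y + 1) + hammingDist x y = Fintype.card ι := by
  have hflip : ∀ a b : ZMod 2, a ≠ b + 1 ↔ ¬ a ≠ b := by decide
  simp only [hammingDist, Pi.add_apply, Pi.one_apply, hflip]
  rw [add_comm, card_filter_add_card_filter_not, card_univ]

theorem hammingDist_add_one_eq_one_iff [Nonempty ι] {x y : ι → ZMod 2} :
    hammingDist x (y + 1) = 1 ↔ hammingDist x y = Fintype.card ι - 1 := by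
  have := hammingDist_add_one_add_hammingDist x y
  have := Fintype.card_pos (α := ι)
  omega

theorem even_hammingNorm_of_hammingDist_add_one_eq_one (hι : Odd (Fintype.card ι))
    {x c : ι → ZMod 2} (hc : Even (hammingNorm c)) (h : hammingDist x (c + 1) = 1) :
    Even (hammingNorm x) := by
  have hd := natCast_hammingDist x (c + 1)
  rw [h, natCast_hammingNorm_add, hammingNorm_one, hι.natCast_zmod_two, hc.natCast_zmod_two] at hd
  rw [← ZMod.natCast_eq_zero_iff_even]
  generalize (hammingNorm x : ZMod 2) = a at hd ⊢
  revert a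
  decide

variable {C : Finset (ι → ZMod 2)}

theorem MinDistAtLeast.image_add_one {d : ℕ} (hC : MinDistAtLeast C d) :
    MinDistAtLeast (C.image (· + 1)) d := by
  simp only [MinDistAtLeast, forall_mem_image, ne_eq, add_left_inj, hammingDist_add_right]
  exact hC

theorem exists_hammingDist_add_one_eq_one_of_card_filter_eq [Nonempty ι]
    (hC : MinDistAtLeast C 3)
    (hA : #((C ×ˢ C).filter fun p => hammingDist p.1 p.2 = Fintype.card ι - 1) = #C) :
    ∀ c ∈ C, ∃ c' ∈ C, hammingDist c (c' + 1) = 1 := by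
  simp only [hammingDist_add_one_eq_one_iff]
  refine exists_mem_of_card_filter_product_eq_card (fun c _ c' hc' c'' hc'' h' h'' => ?_) hA
  simpa using hC.image_add_one.eq_of_hammingDist_eq_one (mem_image_of_mem _ hc')
    (mem_image_of_mem _ hc'') (hammingDist_add_one_eq_one_iff.2 h')
    (hammingDist_add_one_eq_one_iff.2 h'')

variable [DecidableEq ι]

theorem hammingNorm_eq_one_iff {z : ι → ZMod 2} : hammingNorm z = 1 ↔ ∃ i, z = Pi.single i 1 := by
  constructor
  · intro h
    obtain ⟨i, hi⟩ := card_eq_one.mp h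
    refine ⟨i, funext fun j => ?_⟩
    have hj := congrArg (j ∈ ·) hi
    simp only [mem_filter, mem_univ, true_and, mem_singleton, eq_iff_iff] at hj
    by_cases hji : j = i
    · subst hji
      have : ∀ a : ZMod 2, a ≠ 0 → a = 1 := by decide
      simpa using this _ (hj.mpr rfl)
    · simpa [hji] using hj
  · rintro ⟨i, rfl⟩
    simp [hammingNorm, Pi.single_apply, filter_eq']

theorem card_filter_hammingDist_eq_one (y : ι → ZMod 2) :
    #{x | hammingDist x y = 1} = Fintype.card ι := by
  have himage : ({x | hammingDist x y = 1} : Finset (ι → ZMod 2))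
      = univ.image fun i => y + Pi.single i 1 := by
    ext x
    rw [mem_filter, hammingDist_comm, hammingDist_eq_hammingNorm, hammingNorm_eq_one_iff]
    simp only [mem_univ, true_and, mem_image]
    exact exists_congr fun i => by rw [neg_add_eq_iff_eq_add, eq_comm]
  have hinj : Function.Injective fun i => y + (Pi.single i 1 : ι → ZMod 2) := by
    intro i j hij
    simpa [Pi.single_apply] using congrFun hij i
  rw [himage, card_image_of_injective _ hinj, card_univ]

theorem even_hammingNorm_add_single_iff (x : ι → ZMod 2) (i : ι) :
    Even (hammingNorm (x + Pi.single i 1)) ↔ ¬ Even (hammingNorm x) := by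
  rw [← ZMod.natCast_eq_zero_iff_even, ← ZMod.natCast_eq_zero_iff_even, natCast_hammingNorm_add,
    hammingNorm_eq_one_iff.2 ⟨i, rfl⟩]
  generalize (hammingNorm x : ZMod 2) = a
  revert a
  decide

theorem card_filter_even_hammingNorm [Nonempty ι] :
    #{x : ι → ZMod 2 | Even (hammingNorm x)} = 2 ^ (Fintype.card ι - 1) := by
  obtain ⟨i⟩ := ‹Nonempty ι›
  have hflip : ∀ x : ι → ZMod 2, x + Pi.single i 1 + Pi.single i 1 = x := fun x => by
    rw [add_assoc, CharTwo.add_self_eq_zero, add_zero]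
  have hswap : #{x : ι → ZMod 2 | Even (hammingNorm x)}
      = #{x : ι → ZMod 2 | ¬ Even (hammingNorm x)} :=
    card_nbij' (· + Pi.single i 1) (· + Pi.single i 1)
      (fun x hx => mem_filter.2 ⟨mem_univ _,
        (even_hammingNorm_add_single_iff x i).not.2 (not_not.2 (mem_filter.1 hx).2)⟩)
      (fun x hx => mem_filter.2 ⟨mem_univ _,
        (even_hammingNorm_add_single_iff x i).2 (mem_filter.1 hx).2⟩)
      (fun x _ => hflip x) (fun x _ => hflip x)
  have htotal := card_filter_add_card_filter_not (s := univ)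
    fun x : ι → ZMod 2 => Even (hammingNorm x)
  rw [← hswap, card_univ, Fintype.card_fun, ZMod.card] at htotal
  have : 2 ^ Fintype.card ι = 2 * 2 ^ (Fintype.card ι - 1) := by
    rw [← pow_succ', Nat.sub_add_cancel Fintype.card_pos]
  omega

theorem card_filter_exists_hammingDist_eq_one {K : Finset (ι → ZMod 2)}
    (hK : MinDistAtLeast K 3) :
    #{x | ∃ k ∈ K, hammingDist x k = 1} = Fintype.card ι * #K := by
  have hunion : ({x | ∃ k ∈ K, hammingDist x k = 1} : Finset (ι → ZMod 2))
      = K.biUnion fun k => {x | hammingDist x k = 1} := by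
    ext x
    simp
  rw [hunion, card_biUnion, sum_congr rfl fun k _ => card_filter_hammingDist_eq_one k, sum_const,
    smul_eq_mul, mul_comm]
  intro k hk k' hk' hne
  simp only [Function.onFun, disjoint_left, mem_filter, mem_univ, true_and]
  exact fun x h h' => hne (hK.eq_of_hammingDist_eq_one hk hk' h h')

theorem card_filter_exists_hammingDist_add_one_eq_one (hC : MinDistAtLeast C 3) :
    #{x | ∃ c ∈ C, hammingDist x (c + 1) = 1} = Fintype.card ι * #C := by
  have := card_filter_exists_hammingDist_eq_one hC.image_add_one
  rwa [card_image_of_injective C (add_left_injective 1),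
    filter_congr fun x _ => exists_mem_image] at this

theorem card_complement_neighbors_sdiff_and_card_even_sdiff (hι : Odd (Fintype.card ι))
    (hC : MinDistAtLeast C 3)
    (heven : ∀ c ∈ C, Even (hammingNorm c))
    (hA : #((C ×ˢ C).filter fun p => hammingDist p.1 p.2 = Fintype.card ι - 1) = #C) :
    #{x | (∃ c ∈ C, hammingDist x (c + 1) = 1) ∧ x ∉ C} = (Fintype.card ι - 1) * #C ∧
    #{x | Even (hammingNorm x) ∧ x ∉ C ∧ ¬ ((∃ c ∈ C, hammingDist x (c + 1) = 1) ∧ x ∉ C)}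
      + Fintype.card ι * #C = 2 ^ (Fintype.card ι - 1) := by
  have : Nonempty ι := Fintype.card_pos_iff.1 hι.pos
  set S : Finset (ι → ZMod 2) := {x | ∃ c ∈ C, hammingDist x (c + 1) = 1} with hS
  set Ev : Finset (ι → ZMod 2) := {x | Even (hammingNorm x)} with hEv
  have hC_sub : C ⊆ S := fun c hc =>
    mem_filter.2 ⟨mem_univ _, exists_hammingDist_add_one_eq_one_of_card_filter_eq hC hA c hc⟩
  have hS_even : S ⊆ Ev := fun x hx => by
    obtain ⟨c, hc, h⟩ := (mem_filter.1 hx).2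
    exact mem_filter.2
      ⟨mem_univ _, even_hammingNorm_of_hammingDist_add_one_eq_one hι (heven c hc) h⟩
  have hD : ({x | (∃ c ∈ C, hammingDist x (c + 1) = 1) ∧ x ∉ C} : Finset (ι → ZMod 2))
      = S \ C := by
    ext x
    simp [hS]
  have hE : ({x | Even (hammingNorm x) ∧ x ∉ C ∧
      ¬ ((∃ c ∈ C, hammingDist x (c + 1) = 1) ∧ x ∉ C)} : Finset (ι → ZMod 2)) = Ev \ S := by
    ext x
    have hC_near : x ∈ C → ∃ c ∈ C, hammingDist x (c + 1) = 1 :=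
      fun h => (mem_filter.1 (hC_sub h)).2
    simp only [hEv, hS, mem_filter, mem_univ, true_and, mem_sdiff]
    generalize (∃ c ∈ C, hammingDist x (c + 1) = 1) = near at hC_near ⊢
    tauto
  have hS_card : #S = Fintype.card ι * #C := card_filter_exists_hammingDist_add_one_eq_one hC
  have hS_le : #S ≤ #Ev := card_le_card hS_even
  rw [hD, hE, card_sdiff_of_subset hC_sub, card_sdiff_of_subset hS_even, ← hS_card,
    Nat.sub_add_cancel hS_le, hEv, card_filter_even_hammingNorm, hS_card, Nat.sub_mul, one_mul]
  exact ⟨rfl, rfl⟩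

end Binary

theorem stmt15_general (m : ℕ) (hm : 4 ≤ m) (n M : ℕ)
    (hn : n = 2 ^ m - 3) (hM : M = 2 ^ (2 ^ m - m - 4))
    (C : Finset (Fin n → ZMod 2)) (hcard : C.card = M)
    (heven : ∀ c ∈ C, Even (hammingNorm c))
    (hdist : ∀ c ∈ C, ∀ c' ∈ C, c ≠ c' → 4 ≤ hammingDist c c')
    -- distance distribution: A_{n-1} = 1
    (hA1 : ((C ×ˢ C).filter fun p => hammingDist p.1 p.2 = n - 1).card = M) :
    -- D = {x : d(x, complement of C) = 1} \ C has size (n-1)·M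
    ((Finset.univ.filter fun x : Fin n → ZMod 2 =>
        (∃ c ∈ C, hammingDist x (c + 1) = 1) ∧ x ∉ C).card = (n - 1) * M) ∧
    -- E = even-weight words not in C ∪ D has size 3·M
    ((Finset.univ.filter fun x : Fin n → ZMod 2 =>
        Even (hammingNorm x) ∧ x ∉ C ∧
          ¬ ((∃ c ∈ C, hammingDist x (c + 1) = 1) ∧ x ∉ C)).card = 3 * M) := by
  have hn_add : n + 3 = 2 ^ m := by
    have := Nat.pow_le_pow_right two_pos hm
    omega
  have hn_odd : Odd n := by
    obtain ⟨k, hk⟩ : Even (n + 3) := hn_add ▸ Nat.even_pow.2 ⟨even_two, by omega⟩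
    exact ⟨k - 2, by omega⟩
  obtain ⟨hD, hE⟩ := card_complement_neighbors_sdiff_and_card_even_sdiff (by simpa using hn_odd)
    (MinDistAtLeast.mono (C := C) hdist (by norm_num)) heven (by simpa [hcard] using hA1)
  have hpow : 2 ^ (n - 1) = (n + 3) * M := by
    rw [hn_add, hM, ← two_pow_sub_four_eq m hm]
    congr 1
    omega
  rw [Fintype.card_fin, hcard] at hD hE
  refine ⟨hD, ?_⟩
  rw [hpow, add_mul] at hE
  omega

theorem stmt15 (m : ℕ) (hm : 4 ≤ m) (n M : ℕ)
    (hn : n = 2 ^ m - 3) (hM : M = 2 ^ (2 ^ m - m - 4))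
    (C : Finset (Fin n → ZMod 2)) (hcard : C.card = M)
    (heven : ∀ c ∈ C, Even (hammingNorm c))
    (hdist : ∀ c ∈ C, ∀ c' ∈ C, c ≠ c' → 4 ≤ hammingDist c c')
    -- distance distribution: A_{n-1} = 1
    (hA1 : ((C ×ˢ C).filter fun p => hammingDist p.1 p.2 = n - 1).card = M)
    -- distance distribution: A_{n-3} = (n-1)(n-5)/6
    (hA3 : 6 * ((C ×ˢ C).filter fun p => hammingDist p.1 p.2 = n - 3).card
      = M * (n - 1) * (n - 5)) :
    -- D = {x : d(x, complement of C) = 1} \ C has size (n-1)·M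
    ((Finset.univ.filter fun x : Fin n → ZMod 2 =>
        (∃ c ∈ C, hammingDist x (c + 1) = 1) ∧ x ∉ C).card = (n - 1) * M) ∧
    -- E = even-weight words not in C ∪ D has size 3·M
    ((Finset.univ.filter fun x : Fin n → ZMod 2 =>
        Even (hammingNorm x) ∧ x ∉ C ∧
          ¬ ((∃ c ∈ C, hammingDist x (c + 1) = 1) ∧ x ∉ C)).card = 3 * M) :=
  stmt15_general m hm n M hn hM C hcard heven hdist hA1
end
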